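/- Suppose a path from s to x decomposes into at most B maximal segments σ₁, ..., σ_r (r ≤ B) connected by at most B - 1 single edges, where each segment σ_q = v₁^{(q)}, ..., v_{l_q}^{(q)} satisfies d̂(v_{l_q}^{(q)}) ≤ d̂(v₁^{(q)}) + d_σ(v₁^{(q)}, v_{l_q}^{(q)}) + 2εδ·log₂ B (bounded segment slack), each connecting edge (u, v) satisfies d̂(v) ≤ d̂(u) + ω(u,v) + εδ, and d̂(s) ≤ 0. Then d̂(x) ≤ d(s,x) + 2Bεδ·log₂ B + Bεδ, where d(s,x) is the total path length. -/
import Mathlib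


/-- Chaining the slack bound on pre-existing segments with the per-edge invariant on
connecting edges.  A path from `s` to `x` consists of `r ≤ B` segments, segment `q`
having first-vertex estimate `a q`, last-vertex estimate `z q` and length `len q`,
connected by edges of weight `w q`.  If each segment has slack at most `2εδ·log₂ B`,
each connecting edge satisfies the `εδ` invariant, and `d̂(s) ≤ 0`, then
`d̂(x) ≤ d(s,x) + 2Bεδ·log₂ B + Bεδ`. -/
theorem stmt4 (B r : ℕ) (hB : 2 ≤ B) (hr1 : 1 ≤ r) (hrB : r ≤ B)
    (a z len w : ℕ → ℝ) (ε δ : ℝ) (hε : 0 < ε) (hδ : 0 < δ)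
    (hlen : ∀ q, q < r → 0 ≤ len q)
    (hw : ∀ q, q < r - 1 → 0 ≤ w q)
    (hseg : ∀ q, q < r → z q ≤ a q + len q + 2 * ε * δ * Real.logb 2 B)
    (hedge : ∀ q, q < r - 1 → a (q + 1) ≤ z q + w q + ε * δ)
    (hs : a 0 ≤ 0) :
    z (r - 1) ≤ ((∑ q ∈ Finset.range r, len q) + ∑ q ∈ Finset.range (r - 1), w q)
      + 2 * B * ε * δ * Real.logb 2 B + B * ε * δ := by
  set L := Real.logb 2 B with hLdef
  have hL : 0 ≤ L := Real.logb_nonneg one_lt_two (by exact_mod_cast (by omega : 1 ≤ B))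
  have hεδ : 0 ≤ ε * δ := le_of_lt (mul_pos hε hδ)
  have key : ∀ q, q < r → z q ≤ (∑ i ∈ Finset.range (q + 1), len i)
      + (∑ i ∈ Finset.range q, w i) + (q + 1) * (2 * ε * δ * L) + q * (ε * δ) := by
    intro q
    induction q with
    | zero =>
      intro h0
      have := hseg 0 h0
      simp only [zero_add, Finset.sum_range_one, Finset.sum_range_zero, Nat.cast_zero]
      nlinarith [hs, this]
    | succ q ih =>
      intro hq1
      have hq : q < r := Nat.lt_of_succ_lt hq1
      have hq' : q < r - 1 := by omega
      have h1 := ih hq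
      have h2 := hedge q hq'
      have h3 := hseg (q + 1) hq1
      rw [Finset.sum_range_succ (f := len), Finset.sum_range_succ (f := w)]
      push_cast
      nlinarith [h1, h2, h3]
  have hfin := key (r - 1) (by omega)
  have hr : r - 1 + 1 = r := by omega
  rw [hr] at hfin
  have hcast : ((r - 1 : ℕ) : ℝ) = (r : ℝ) - 1 := by
    rw [Nat.cast_sub hr1]; norm_num
  rw [hcast] at hfin
  have hrB' : (r : ℝ) ≤ (B : ℝ) := by exact_mod_cast hrB
  nlinarith [mul_nonneg hεδ hL, hfin, hεδ, hrB']
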